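/- Every μ-intersection-linked forcing notion is μ-m-linked for every natural number m > 0: P can be covered by μ-many m-linked sets whose union is all of P. -/

import Mathlib

/-- The intersection index `i_*(q̄)`: the maximal size of a set `F ⊆ n` such that
`{q i : i ∈ F}` has a lower bound in `P`. -/
noncomputable def iStar {P : Type*} [Preorder P] {n : ℕ} (q : Fin n → P) : ℕ :=
  sSup {k | ∃ F : Finset (Fin n), (∃ r, ∀ i ∈ F, r ≤ q i) ∧ F.card = k}

/-- The intersection number of `Q` in the forcing notion `P`:
`inf { i_*(q̄)/n : q̄ ∈ Qⁿ, n ≥ 1 }`. -/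
noncomputable def intNum (P : Type*) [Preorder P] (Q : Set P) : ℝ :=
  sInf {x | ∃ n : ℕ, 0 < n ∧ ∃ q : Fin n → P, (∀ i, q i ∈ Q) ∧ x = (iStar q : ℝ) / n}

/-!
If `int(Q) > 1 - 1/m`, then for any `n ≤ m` elements `q̄` of `Q` we get
`i_*(q̄) ≥ n · int(Q) > n - 1`, so all `n` of them have a common lower bound: `Q` is
`m`-linked. Taking `ε < 1/m`, the upward closures of the sets `Q_{i,ε}` are then `m`-linked,
and they cover `P` because `⋃ i, Q_{i,ε}` is dense.
-/

section

variable {P : Type*} [Preorder P]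

def IsLinked (m : ℕ) (R : Set P) : Prop :=
  ∀ S : Finset P, ↑S ⊆ R → S.card ≤ m → ∃ r, ∀ a ∈ S, r ≤ a

theorem IsLinked.upperClosure {m : ℕ} {R : Set P} (hR : IsLinked m R) :
    IsLinked m (upperClosure R : Set P) := by
  classical
  intro S hS hSm
  have hbelow : ∀ a ∈ S, ∃ b ∈ R, b ≤ a := fun a ha => mem_upperClosure.mp (hS ha)
  choose w hwR hwle using hbelow
  obtain ⟨r, hr⟩ := hR (S.attach.image fun a : S => w a a.2)
    (by intro b hb; obtain ⟨a, -, rfl⟩ := Finset.mem_image.mp hb; exact hwR _ _)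
    ((Finset.card_image_le).trans (by simpa using hSm))
  exact ⟨r, fun a ha =>
    (hr _ (Finset.mem_image_of_mem _ (S.mem_attach ⟨a, ha⟩))).trans (hwle a ha)⟩

theorem exists_forall_le_of_le_iStar [Nonempty P] {n : ℕ} {q : Fin n → P} (h : n ≤ iStar q) :
    ∃ r, ∀ i, r ≤ q i := by
  have hne : {k | ∃ F : Finset (Fin n), (∃ r, ∀ i ∈ F, r ≤ q i) ∧ F.card = k}.Nonempty :=
    ⟨0, ∅, ⟨Classical.arbitrary P, by simp⟩, rfl⟩
  have hbdd : BddAbove {k | ∃ F : Finset (Fin n), (∃ r, ∀ i ∈ F, r ≤ q i) ∧ F.card = k} :=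
    ⟨n, by rintro _ ⟨F, -, rfl⟩; simpa using F.card_le_univ⟩
  obtain ⟨F, ⟨r, hr⟩, hF⟩ := Nat.sSup_mem hne hbdd
  have hFuniv : F = Finset.univ :=
    Finset.eq_univ_of_card F (le_antisymm (by simpa using F.card_le_univ) (by rw [hF]; simpa))
  exact ⟨r, fun i => hr i (hFuniv ▸ Finset.mem_univ i)⟩

theorem intNum_le_iStar_div {Q : Set P} {n : ℕ} (hn : 0 < n) {q : Fin n → P}
    (hq : ∀ i, q i ∈ Q) : intNum P Q ≤ (iStar q : ℝ) / n :=
  csInf_le ⟨0, by rintro _ ⟨k, -, p, -, rfl⟩; positivity⟩ ⟨n, hn, q, hq, rfl⟩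

theorem intNum_empty : intNum P ∅ = 0 := by
  unfold intNum
  convert Real.sInf_empty
  refine Set.eq_empty_of_forall_notMem ?_
  rintro _ ⟨n, hn, q, hq, -⟩
  exact hq ⟨0, hn⟩

theorem nonempty_of_intNum_pos {Q : Set P} (h : 0 < intNum P Q) : Q.Nonempty :=
  Set.nonempty_iff_ne_empty.mpr fun hQ => by simp [hQ, intNum_empty] at h

theorem exists_forall_le_of_mul_one_sub_intNum_lt_one [Nonempty P] {Q : Set P} {n : ℕ}
    (h : n * (1 - intNum P Q) < 1) {q : Fin n → P} (hq : ∀ i, q i ∈ Q) :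
    ∃ r, ∀ i, r ≤ q i := by
  rcases Nat.eq_zero_or_pos n with rfl | hn
  · exact ⟨Classical.arbitrary P, fun i => i.elim0⟩
  apply exists_forall_le_of_le_iStar
  have hnR : (0 : ℝ) < n := by exact_mod_cast hn
  have hiStar : n * intNum P Q ≤ iStar q :=
    (le_div_iff₀' hnR).mp (intNum_le_iStar_div hn hq)
  have : (n : ℝ) < iStar q + 1 := by linarith
  exact_mod_cast Nat.lt_succ_iff.mp (by exact_mod_cast this)

theorem isLinked_of_mul_one_sub_intNum_lt_one {Q : Set P} {m : ℕ} (hm : 0 < m)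
    (h : m * (1 - intNum P Q) < 1) : IsLinked m Q := by
  have hpos : 0 < intNum P Q := by
    have : (1 : ℝ) ≤ m := by exact_mod_cast hm
    nlinarith
  have : Nonempty P := ⟨(nonempty_of_intNum_pos hpos).some⟩
  intro S hSQ hSm
  have hS : (S.card : ℝ) * (1 - intNum P Q) < 1 := by
    rcases le_or_gt (1 - intNum P Q) 0 with hle | hlt
    · nlinarith
    · exact lt_of_le_of_lt (by gcongr) h
  obtain ⟨r, hr⟩ := exists_forall_le_of_mul_one_sub_intNum_lt_one hS
    (q := fun j => (S.equivFin.symm j : P)) fun j => hSQ (S.equivFin.symm j).2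
  exact ⟨r, fun a ha => by simpa using hr (S.equivFin ⟨a, ha⟩)⟩

end

theorem intLinked_implies_mLinked {P : Type*} [Preorder P] {I : Type*}
    (Q : I → ℚ → Set P)
    (hint : ∀ i, ∀ ε : ℚ, 0 < ε → ε < 1 → (1 - (ε : ℝ)) ≤ intNum P (Q i ε))
    (hdense : ∀ ε : ℚ, 0 < ε → ε < 1 → ∀ p : P, ∃ q, (∃ i, q ∈ Q i ε) ∧ q ≤ p) :
    ∀ m : ℕ, 0 < m → ∃ R : I → Set P,
      (⋃ i, R i) = Set.univ ∧
      (∀ i, ∀ S : Finset P, ↑S ⊆ R i → S.card ≤ m → ∃ r, ∀ a ∈ S, r ≤ a) := by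
  intro m hm
  set ε : ℚ := 1 / (m + 1) with hε
  have hε0 : 0 < ε := by positivity
  have hε1 : ε < 1 := by
    rw [hε, div_lt_one (by positivity)]
    have : (1 : ℚ) ≤ m := by exact_mod_cast hm
    linarith
  have hmε : (m : ℝ) * ε < 1 := by
    rw [hε]; push_cast
    rw [mul_one_div, div_lt_one (by positivity)]
    linarith
  refine ⟨fun i => upperClosure (Q i ε), ?_, fun i => ?_⟩
  · refine Set.eq_univ_of_forall fun p => ?_
    obtain ⟨q, ⟨i, hq⟩, hqp⟩ := hdense ε hε0 hε1 p
    exact Set.mem_iUnion.mpr ⟨i, mem_upperClosure.mpr ⟨q, hq, hqp⟩⟩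
  · refine IsLinked.upperClosure (isLinked_of_mul_one_sub_intNum_lt_one hm ?_)
    have := hint i ε hε0 hε1
    calc (m : ℝ) * (1 - intNum P (Q i ε)) ≤ m * ε := by gcongr; linarith
      _ < 1 := hmε
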